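/- arXiv:1407.5877 — 7 statements merged into one kernel-verified Lean document; each statement's English description precedes it below -/
import Mathlib

section
/- Let C ⊆ ℝ^q be a polyhedral cone with nonempty interior containing no lines, and let c ∈ int C with c_q = 1. Let P ∈ ℝ^{q×d}, B ∈ ℝ^{m×d}, b ∈ ℝ^m, S = {x ∈ ℝ^d : Bx ≥ b} (assumed nonempty), and let 𝒫 = P[S] + C be the upper image of the vector optimization problem of minimizing Px over S with respect to ≤_C. Let Z(x) = sup{xᵀz : z ∈ −𝒫} be the support function of −𝒫, and let 𝒟* = D*[T] − K be the lower image of the geometric dual problem, where T = {(u,w) ∈ ℝ^m × ℝ^q : u ≥ 0, Bᵀu = Pᵀw, cᵀw = 1, w ∈ C⁺}, D*(u,w) = (w_1,…,w_{q−1}, bᵀu)ᵀ, and K = cone{e^q}. Then 𝒟* = {w ∈ ℝ^q : −w_q ≥ Z(w_1,…,w_{q−1}, 1 − Σ_{i=1}^{q−1} c_i w_i)}. -/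
open Matrix Pointwise

/-- Support function of a set `A ⊆ ℝⁿ`, with values in the extended reals. -/
noncomputable def suppF {n : ℕ} (A : Set (Fin n → ℝ)) (x : Fin n → ℝ) : EReal :=
  sSup ((fun z => ((x ⬝ᵥ z : ℝ) : EReal)) '' A)

/-!
Write `ŵ` for the lift of `(w_1, …, w_{q-1})` to the hyperplane `cᵀŵ = 1`. The inequality
`Z(ŵ) ≤ -w_q` says `w_q ≤ ŵᵀy` on `P[S] + C`; as `C` is a cone and `S ≠ ∅`, this splits into
`ŵ ∈ C⁺` and `w_q ≤ (Pᵀŵ)ᵀx` for all `x ∈ S`. By LP duality the latter holds iff some `u ≥ 0`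
has `Bᵀu = Pᵀŵ` and `w_q ≤ bᵀu`, i.e. iff `(u, ŵ) ∈ T` and `w ∈ D*(u, ŵ) - K`. LP duality is
the affine Farkas lemma: homogenise, and separate from a finitely generated cone, which is closed
by the conic Carathéodory theorem.
-/

section ConicHull

variable {ι E : Type*} [AddCommGroup E] [Module ℝ E]

def conicHullOn (v : ι → E) (s : Finset ι) : PointedCone ℝ E where
  carrier := {x | ∃ l : ι → ℝ, (∀ i ∈ s, 0 ≤ l i) ∧ x = ∑ i ∈ s, l i • v i}
  add_mem' := by
    rintro _ _ ⟨l₁, h₁, rfl⟩ ⟨l₂, h₂, rfl⟩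
    exact ⟨l₁ + l₂, fun i hi => add_nonneg (h₁ i hi) (h₂ i hi),
      by simp only [Pi.add_apply, add_smul, Finset.sum_add_distrib]⟩
  zero_mem' := ⟨0, fun _ _ => le_rfl, by simp⟩
  smul_mem' := by
    rintro ⟨c, hc⟩ _ ⟨l, hl, rfl⟩
    exact ⟨c • l, fun i hi => mul_nonneg hc (hl i hi), by simp [Finset.smul_sum, mul_smul]⟩

lemma mem_conicHullOn {v : ι → E} {s : Finset ι} {x : E} :
    x ∈ conicHullOn v s ↔ ∃ l : ι → ℝ, (∀ i ∈ s, 0 ≤ l i) ∧ x = ∑ i ∈ s, l i • v i :=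
  Iff.rfl

lemma mem_conicHullOn_of_mem (v : ι → E) {s : Finset ι} {i : ι} (hi : i ∈ s) :
    v i ∈ conicHullOn v s := by
  classical
  exact ⟨fun j => if j = i then 1 else 0, fun j _ => by positivity, by simp [hi]⟩

lemma coe_conicHullOn_univ [Fintype ι] (v : ι → E) :
    (conicHullOn v Finset.univ : Set E) =
      {x | ∃ l : ι → ℝ, (∀ i, 0 ≤ l i) ∧ x = ∑ i, l i • v i} := by
  ext x
  simp [mem_conicHullOn]

lemma conicHullOn_mono [DecidableEq ι] (v : ι → E) {s t : Finset ι} (hst : s ⊆ t) :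
    conicHullOn v s ≤ conicHullOn v t := by
  rintro _ ⟨l, hl, rfl⟩
  refine ⟨fun i => if i ∈ s then l i else 0, fun i _ => ?_, ?_⟩
  · dsimp only
    split_ifs with hi
    exacts [hl i hi, le_rfl]
  · rw [← Finset.sum_subset hst fun i _ hi => by simp [hi]]
    exact Finset.sum_congr rfl fun i hi => by simp [hi]

lemma exists_mem_conicHullOn_erase [DecidableEq ι] {v : ι → E} {s : Finset ι} {x : E}
    (hx : x ∈ conicHullOn v s) (hs : ¬LinearIndepOn ℝ v s) :
    ∃ i ∈ s, x ∈ conicHullOn v (s.erase i) := by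
  obtain ⟨l, hl, rfl⟩ := hx
  obtain ⟨g, hg, hgpos⟩ : ∃ g : ι → ℝ, ∑ i ∈ s, g i • v i = 0 ∧ ∃ i ∈ s, 0 < g i := by
    obtain ⟨g, hg, j, hj, hgj⟩ := not_linearIndepOn_finset_iff.mp hs
    rcases hgj.lt_or_gt with hneg | hpos
    · exact ⟨-g, by simp [hg], j, hj, by simpa using hneg⟩
    · exact ⟨g, hg, j, hj, hpos⟩
  obtain ⟨i₀, hi₀, hmin⟩ :=
    (s.filter (0 < g ·)).exists_min_image (fun i => l i / g i)
      (by simpa [Finset.filter_nonempty_iff] using hgpos)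
  obtain ⟨hi₀s, hgi₀⟩ := Finset.mem_filter.mp hi₀
  set τ := l i₀ / g i₀
  have hτ : 0 ≤ τ := div_nonneg (hl i₀ hi₀s) hgi₀.le
  refine ⟨i₀, hi₀s, fun i => l i - τ * g i, fun i hi => ?_, ?_⟩
  · rcases lt_or_ge 0 (g i) with hgi | hgi
    · have := hmin i (Finset.mem_filter.mpr ⟨Finset.mem_of_mem_erase hi, hgi⟩)
      rw [le_div_iff₀ hgi] at this
      linarith
    · nlinarith [hl i (Finset.mem_of_mem_erase hi)]
  · have hzero : (l i₀ - τ * g i₀) • v i₀ = 0 := by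
      rw [div_mul_cancel₀ _ hgi₀.ne', sub_self, zero_smul]
    rw [Finset.sum_erase s (f := fun i => (l i - τ * g i) • v i) hzero]
    simp only [sub_smul, Finset.sum_sub_distrib, mul_smul, ← Finset.smul_sum, hg, smul_zero,
      sub_zero]

theorem exists_linearIndepOn_of_mem_conicHullOn {v : ι → E} {s : Finset ι} {x : E}
    (hx : x ∈ conicHullOn v s) :
    ∃ t ⊆ s, LinearIndepOn ℝ v t ∧ x ∈ conicHullOn v t := by
  classical
  induction s using Finset.strongInduction with
  | H s ih =>
    by_cases hs : LinearIndepOn ℝ v s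
    · exact ⟨s, subset_rfl, hs, hx⟩
    · obtain ⟨i, hi, hxi⟩ := exists_mem_conicHullOn_erase hx hs
      obtain ⟨t, hts, ht, hxt⟩ := ih _ (Finset.erase_ssubset hi) hxi
      exact ⟨t, hts.trans (Finset.erase_subset i s), ht, hxt⟩

end ConicHull

section Closed

variable {ι E : Type*} [AddCommGroup E] [Module ℝ E] [TopologicalSpace E]
  [IsTopologicalAddGroup E] [ContinuousSMul ℝ E]

lemma isClosed_conicHullOn_of_linearIndepOn [T2Space E] {v : ι → E} {s : Finset ι}
    (hs : LinearIndepOn ℝ v s) : IsClosed (conicHullOn v s : Set E) := by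
  classical
  set f := Fintype.linearCombination ℝ (fun i : (s : Set ι) => v i)
  have hf : Topology.IsClosedEmbedding f := LinearMap.isClosedEmbedding_of_injective
    (LinearMap.ker_eq_bot.mpr (linearIndependent_iff_injective_fintypeLinearCombination.mp hs))
  have himage : (conicHullOn v s : Set E) = f '' Set.Ici 0 := by
    ext x
    constructor
    · rintro ⟨l, hl, rfl⟩
      exact ⟨fun i => l i, fun i => hl i i.2, by
        simp [f, Fintype.linearCombination_apply, Finset.sum_attach s fun i => l i • v i]⟩
    · rintro ⟨l, hl, rfl⟩
      refine ⟨fun i => if h : i ∈ s then l ⟨i, h⟩ else 0,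
        fun i hi => by simpa [hi] using hl ⟨i, hi⟩, ?_⟩
      simp only [f, Fintype.linearCombination_apply, dite_smul, zero_smul]
      conv_rhs => rw [← Finset.sum_attach]
      exact Finset.sum_congr rfl fun i _ => by simp
  rw [himage]
  exact hf.isClosedMap _ isClosed_Ici

lemma isClosed_conicHullOn [T2Space E] (v : ι → E) (s : Finset ι) :
    IsClosed (conicHullOn v s : Set E) := by
  have hunion : (conicHullOn v s : Set E) =
      ⋃ t ∈ {t | t ⊆ s ∧ LinearIndepOn ℝ v t}, (conicHullOn v t : Set E) := by
    classical
    ext x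
    simp only [Set.mem_iUnion, Set.mem_ofPred_eq, SetLike.mem_coe, exists_prop]
    constructor
    · intro hx
      obtain ⟨t, hts, ht, hxt⟩ := exists_linearIndepOn_of_mem_conicHullOn hx
      exact ⟨t, ⟨hts, ht⟩, hxt⟩
    · rintro ⟨t, ⟨hts, -⟩, hxt⟩
      exact conicHullOn_mono v hts hxt
  rw [hunion]
  have hfin : {t | t ⊆ s ∧ LinearIndepOn ℝ v t}.Finite :=
    s.powerset.finite_toSet.subset fun t ht => Finset.mem_powerset.mpr ht.1
  exact hfin.isClosed_biUnion fun t ht => isClosed_conicHullOn_of_linearIndepOn ht.2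

lemma exists_strongDual_neg_of_notMem_conicHullOn [T2Space E] [LocallyConvexSpace ℝ E]
    {v : ι → E} {s : Finset ι} {x : E} (hx : x ∉ conicHullOn v s) :
    ∃ f : StrongDual ℝ E, (∀ i ∈ s, 0 ≤ f (v i)) ∧ f x < 0 := by
  obtain ⟨f, hf, hfx⟩ :=
    ProperCone.hyperplane_separation_point ⟨conicHullOn v s, isClosed_conicHullOn v s⟩ hx
  exact ⟨f, fun i hi => hf _ (mem_conicHullOn_of_mem v hi), hfx⟩

end Closed

lemma exists_dotProduct_neg_of_notMem_conicHullOn {ι κ : Type*} [Fintype κ] {v : ι → κ → ℝ}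
    {s : Finset ι} {x : κ → ℝ} (hx : x ∉ conicHullOn v s) :
    ∃ y : κ → ℝ, (∀ i ∈ s, 0 ≤ v i ⬝ᵥ y) ∧ x ⬝ᵥ y < 0 := by
  classical
  obtain ⟨f, hf, hfx⟩ := exists_strongDual_neg_of_notMem_conicHullOn hx
  set y := (dotProductEquiv ℝ κ).symm f.toLinearMap
  have hy : ∀ z, f z = z ⬝ᵥ y := fun z => by
    rw [dotProduct_comm, ← dotProductEquiv_apply_apply, LinearEquiv.apply_symm_apply]; rfl
  exact ⟨y, fun i hi => hy (v i) ▸ hf i hi, hy x ▸ hfx⟩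

lemma nonneg_of_forall_le_add_mul {γ α β : ℝ} (h : ∀ s : ℝ, 0 ≤ s → γ ≤ α + s * β) :
    0 ≤ β := by
  by_contra! hβ
  have hγ := h 0 le_rfl
  have hs := h ((α - γ + 1) / -β) (div_nonneg (by linarith) (by linarith))
  rw [div_mul_eq_mul_div, div_neg, mul_div_cancel_right₀ _ hβ.ne] at hs
  linarith

lemma forall_le_add_pointedCone_iff {E : Type*} [AddCommGroup E] [Module ℝ E] {A : Set E}
    (hA : A.Nonempty) (C : PointedCone ℝ E) (f : E →ₗ[ℝ] ℝ) (r : ℝ) :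
    (∀ y ∈ A + C, r ≤ f y) ↔ (∀ y ∈ C, 0 ≤ f y) ∧ ∀ a ∈ A, r ≤ f a := by
  constructor
  · intro h
    refine ⟨fun y hy => ?_,
      fun a ha => by simpa using h (a + 0) (Set.add_mem_add ha C.zero_mem)⟩
    obtain ⟨a, ha⟩ := hA
    refine nonneg_of_forall_le_add_mul (γ := r) (α := f a) fun s hs => ?_
    simpa using h (a + s • y) (Set.add_mem_add ha (C.smul_mem hs hy))
  · rintro ⟨hC, hA⟩ _ ⟨a, ha, y, hy, rfl⟩
    simpa using add_le_add (hA a ha) (hC y hy)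

lemma sumElim_const_dotProduct {R ν : Type*} [CommSemiring R] [Fintype ν] (u : ν → R) (s : R)
    (y : ν ⊕ Unit → R) :
    Sum.elim u (fun _ => s) ⬝ᵥ y = u ⬝ᵥ (y ∘ Sum.inl) + s * y (Sum.inr ()) := by
  simp [dotProduct, Fintype.sum_sum_type]

section Farkas

variable {μ ν : Type*} [Fintype ν]

lemma dotProduct_nonneg_of_recession {B : Matrix μ ν ℝ} {b : μ → ℝ} {a : ν → ℝ} {γ : ℝ}
    (h : ∀ x, b ≤ B *ᵥ x → γ ≤ a ⬝ᵥ x) {x₀ : ν → ℝ} (hx₀ : b ≤ B *ᵥ x₀) {x : ν → ℝ}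
    (hx : 0 ≤ B *ᵥ x) : 0 ≤ a ⬝ᵥ x := by
  refine nonneg_of_forall_le_add_mul (α := a ⬝ᵥ x₀) (γ := γ) fun s hs => ?_
  have hfeas : b ≤ B *ᵥ (x₀ + s • x) := by
    rw [mulVec_add, mulVec_smul]
    exact le_add_of_le_of_nonneg hx₀ (smul_nonneg hs hx)
  simpa [dotProduct_add, dotProduct_smul] using h _ hfeas

lemma dotProduct_add_mul_nonneg_of_homogenized {B : Matrix μ ν ℝ} {b : μ → ℝ} {a : ν → ℝ}
    {γ : ℝ} (hfeas : ∃ x₀, b ≤ B *ᵥ x₀) (h : ∀ x, b ≤ B *ᵥ x → γ ≤ a ⬝ᵥ x) {x : ν → ℝ} {t : ℝ}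
    (ht : t ≤ 0) (hx : 0 ≤ B *ᵥ x + t • b) : 0 ≤ a ⬝ᵥ x + γ * t := by
  rcases ht.lt_or_eq with ht | rfl
  · have hscaled : b ≤ B *ᵥ ((-t)⁻¹ • x) := by
      rw [mulVec_smul, le_inv_smul_iff_of_pos (neg_pos.mpr ht)]
      intro i
      have := hx i
      simp only [Pi.add_apply, Pi.smul_apply, smul_eq_mul, Pi.zero_apply] at this ⊢
      linarith
    have := h _ hscaled
    rw [dotProduct_smul, smul_eq_mul, le_inv_mul_iff₀ (neg_pos.mpr ht)] at this
    linarith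
  · obtain ⟨x₀, hx₀⟩ := hfeas
    simpa using dotProduct_nonneg_of_recession h hx₀ (by simpa using hx)

theorem exists_dual_of_forall_le_dotProduct [Fintype μ] (B : Matrix μ ν ℝ) (b : μ → ℝ)
    (a : ν → ℝ) (γ : ℝ) (hfeas : ∃ x₀, b ≤ B *ᵥ x₀) (h : ∀ x, b ≤ B *ᵥ x → γ ≤ a ⬝ᵥ x) :
    ∃ u, 0 ≤ u ∧ Bᵀ *ᵥ u = a ∧ γ ≤ b ⬝ᵥ u := by
  -- `(a, γ)` is a conic combination of the rows `(B j, b j)` and `(0, -1)` iff a dual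
  -- certificate `u` exists; otherwise a separating `(x, t)` contradicts the bound `γ`.
  let v : μ ⊕ Unit → ν ⊕ Unit → ℝ :=
    Sum.elim (fun j => Sum.elim (B j) fun _ => b j) fun _ => Sum.elim 0 fun _ => -1
  have hmem : Sum.elim a (fun _ => γ) ∈ conicHullOn v Finset.univ := by
    by_contra hnot
    obtain ⟨y, hy, hya⟩ := exists_dotProduct_neg_of_notMem_conicHullOn hnot
    have ht : y (Sum.inr ()) ≤ 0 := by
      simpa [v, sumElim_const_dotProduct] using hy (Sum.inr ()) (Finset.mem_univ _)
    have hx : 0 ≤ B *ᵥ (y ∘ Sum.inl) + y (Sum.inr ()) • b := fun i => by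
      simpa [v, sumElim_const_dotProduct, mulVec, mul_comm] using
        hy (Sum.inl i) (Finset.mem_univ _)
    have := dotProduct_add_mul_nonneg_of_homogenized hfeas h ht hx
    rw [sumElim_const_dotProduct] at hya
    linarith
  obtain ⟨l, hl, hsum⟩ := hmem
  refine ⟨l ∘ Sum.inl, fun j => hl _ (Finset.mem_univ _), ?_, ?_⟩
  · ext i
    simpa [v, Fintype.sum_sum_type, mulVec, dotProduct, mul_comm] using
      (congrFun hsum (Sum.inl i)).symm
  · have := congrFun hsum (Sum.inr ())
    simp only [v, Sum.elim_inr, Sum.elim_inl, Finset.sum_apply, Pi.smul_apply, smul_eq_mul,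
      Fintype.sum_sum_type, Finset.univ_unique, PUnit.default_eq_unit, Finset.sum_singleton,
      mul_neg, mul_one] at this
    have := hl (Sum.inr ()) (Finset.mem_univ _)
    simp only [dotProduct, Function.comp_apply, mul_comm (b _)]
    linarith

end Farkas

theorem exists_dual_iff_forall_le_dotProduct {μ ν : Type*} [Fintype μ] [Fintype ν]
    (B : Matrix μ ν ℝ) (b : μ → ℝ) (a : ν → ℝ) (γ : ℝ) (hfeas : ∃ x₀, b ≤ B *ᵥ x₀) :
    (∃ u, 0 ≤ u ∧ Bᵀ *ᵥ u = a ∧ γ ≤ b ⬝ᵥ u) ↔ ∀ x, b ≤ B *ᵥ x → γ ≤ a ⬝ᵥ x := by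
  refine ⟨?_, exists_dual_of_forall_le_dotProduct B b a γ hfeas⟩
  rintro ⟨u, hu, rfl, hγ⟩ x hx
  calc γ ≤ b ⬝ᵥ u := hγ
    _ ≤ (B *ᵥ x) ⬝ᵥ u := dotProduct_le_dotProduct_of_nonneg_right hx hu
    _ = Bᵀ *ᵥ u ⬝ᵥ x := by
      rw [dotProduct_comm (Bᵀ *ᵥ u), dotProduct_transpose_mulVec, dotProduct_comm]

lemma suppF_neg_le_iff {n : ℕ} (A : Set (Fin n → ℝ)) (x : Fin n → ℝ) (r : ℝ) :
    suppF (-A) x ≤ (r : EReal) ↔ ∀ y ∈ A, -r ≤ x ⬝ᵥ y := by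
  rw [suppF, sSup_le_iff]
  constructor
  · intro h y hy
    have h0 := h _ ⟨-y, Set.neg_mem_neg.mpr hy, rfl⟩
    rw [EReal.coe_le_coe_iff, dotProduct_neg] at h0
    linarith
  · rintro h _ ⟨z, hz, rfl⟩
    rw [EReal.coe_le_coe_iff]
    have h0 := h (-z) (Set.mem_neg.mp hz)
    rw [dotProduct_neg] at h0
    linarith

section FinSnoc

variable {n : ℕ}

lemma exists_nonneg_eq_snoc_sub_smul_single_iff (w : Fin (n + 1) → ℝ) (x : Fin n → ℝ) (β : ℝ) :
    (∃ lam : ℝ, 0 ≤ lam ∧ w = Fin.snoc x β - lam • Pi.single (Fin.last n) 1) ↔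
      Fin.init w = x ∧ w (Fin.last n) ≤ β := by
  constructor
  · rintro ⟨lam, hlam, rfl⟩
    refine ⟨funext fun i => ?_, by simpa using hlam⟩
    simp [Fin.init, (Fin.castSucc_lt_last i).ne]
  · rintro ⟨rfl, hw⟩
    refine ⟨β - w (Fin.last n), by linarith, funext fun i => ?_⟩
    refine Fin.lastCases ?_ (fun i => ?_) i
    · simp
    · simp [Fin.init, (Fin.castSucc_lt_last i).ne]

def hyperplaneLift (c : Fin (n + 1) → ℝ) (x : Fin n → ℝ) : Fin (n + 1) → ℝ :=
  Fin.snoc x (1 - ∑ i, c i.castSucc * x i)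

lemma init_hyperplaneLift (c : Fin (n + 1) → ℝ) (x : Fin n → ℝ) :
    Fin.init (hyperplaneLift c x) = x :=
  Fin.init_snoc _ _

lemma dotProduct_hyperplaneLift {c : Fin (n + 1) → ℝ} (hc : c (Fin.last n) = 1)
    (x : Fin n → ℝ) : c ⬝ᵥ hyperplaneLift c x = 1 := by
  simp [hyperplaneLift, dotProduct, Fin.sum_univ_castSucc, hc]

lemma hyperplaneLift_init {c w : Fin (n + 1) → ℝ} (hc : c (Fin.last n) = 1)
    (hw : c ⬝ᵥ w = 1) : hyperplaneLift c (Fin.init w) = w := by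
  rw [dotProduct, Fin.sum_univ_castSucc, hc, one_mul] at hw
  refine funext fun i => Fin.lastCases ?_ (fun i => ?_) i
  · simp [hyperplaneLift, Fin.init, ← hw]
  · simp [hyperplaneLift, Fin.init]

end FinSnoc

/-- The paper's `q` is `q + 1` here. -/
theorem stmt0_general (q d m : ℕ)
    (C : Set (Fin (q + 1) → ℝ))
    (hCpoly : ∃ (k : ℕ) (v : Fin k → (Fin (q + 1) → ℝ)),
      C = {x | ∃ lam : Fin k → ℝ, (∀ i, 0 ≤ lam i) ∧ x = ∑ i, lam i • v i})
    (c : Fin (q + 1) → ℝ) (hcq : c (Fin.last q) = 1)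
    (P : Matrix (Fin (q + 1)) (Fin d) ℝ) (B : Matrix (Fin m) (Fin d) ℝ) (b : Fin m → ℝ)
    (S : Set (Fin d → ℝ)) (hS : S = {x | ∀ i, b i ≤ (B *ᵥ x) i}) (hSne : S.Nonempty)
    (Pimg : Set (Fin (q + 1) → ℝ)) (hPimg : Pimg = (fun x => P *ᵥ x) '' S + C)
    (Z : (Fin (q + 1) → ℝ) → EReal) (hZ : Z = suppF (-Pimg))
    (T : Set ((Fin m → ℝ) × (Fin (q + 1) → ℝ)))
    (hT : T = {p | (∀ j, 0 ≤ p.1 j) ∧ Bᵀ *ᵥ p.1 = Pᵀ *ᵥ p.2 ∧ c ⬝ᵥ p.2 = 1 ∧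
      ∀ y ∈ C, 0 ≤ p.2 ⬝ᵥ y})
    (Dstar : Set (Fin (q + 1) → ℝ))
    (hD : Dstar = {v | ∃ p ∈ T, ∃ lam : ℝ, 0 ≤ lam ∧
      v = (Fin.snoc (fun i : Fin q => p.2 i.castSucc) (b ⬝ᵥ p.1) : Fin (q + 1) → ℝ)
          - lam • (Pi.single (Fin.last q) 1 : Fin (q + 1) → ℝ)}) :
    Dstar = {w | Z (Fin.snoc (fun i : Fin q => w i.castSucc)
        (1 - ∑ i : Fin q, c i.castSucc * w i.castSucc) : Fin (q + 1) → ℝ)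
      ≤ ((-(w (Fin.last q)) : ℝ) : EReal)} := by
  obtain ⟨k, v, rfl⟩ := hCpoly
  subst hS hPimg hZ hT hD
  rw [← coe_conicHullOn_univ]
  ext w
  change _ ↔ suppF _ (hyperplaneLift c (Fin.init w)) ≤ _
  set w' := hyperplaneLift c (Fin.init w)
  have hLP := exists_dual_iff_forall_le_dotProduct B b (Pᵀ *ᵥ w') (w (Fin.last q)) hSne
  simp only [dotProduct_comm (Pᵀ *ᵥ w'), dotProduct_transpose_mulVec] at hLP
  have hsplit := forall_le_add_pointedCone_iff (hSne.image (P *ᵥ ·)) (conicHullOn v .univ)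
    (dotProductEquiv ℝ _ w') (w (Fin.last q))
  simp only [dotProductEquiv_apply_apply, Set.forall_mem_image] at hsplit
  rw [suppF_neg_le_iff, neg_neg, hsplit]
  constructor
  · rintro ⟨⟨u, w''⟩, ⟨hu, hBu, hcw, hC⟩, hw⟩
    obtain ⟨hinit, hlast⟩ := (exists_nonneg_eq_snoc_sub_smul_single_iff _ _ _).mp hw
    obtain rfl : w' = w'' :=
      (congrArg (hyperplaneLift c) hinit).trans (hyperplaneLift_init hcq hcw)
    exact ⟨hC, hLP.mp ⟨u, hu, hBu, hlast⟩⟩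
  · rintro ⟨hC, hS⟩
    obtain ⟨u, hu, hBu, hlast⟩ := hLP.mpr hS
    exact ⟨(u, w'), ⟨hu, hBu, dotProduct_hyperplaneLift hcq _, hC⟩,
      (exists_nonneg_eq_snoc_sub_smul_single_iff _ _ _).mpr
        ⟨(init_hyperplaneLift c _).symm, hlast⟩⟩

/-- the lower image of the geometric dual problem equals
`{w : −w_q ≥ Z(w_1,…,w_{q−1}, 1 − Σ c_i w_i)}`, where `Z` is the support
function of `−Pimg` and `Pimg = P[S] + C` is the upper image of the primal problem.
Here the dimension of the value space is `q + 1` (so the paper's `q` is `q+1`). -/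
theorem stmt0 (q d m : ℕ)
    (C : Set (Fin (q + 1) → ℝ))
    (hCpoly : ∃ (k : ℕ) (v : Fin k → (Fin (q + 1) → ℝ)),
      C = {x | ∃ lam : Fin k → ℝ, (∀ i, 0 ≤ lam i) ∧ x = ∑ i, lam i • v i})
    (hCint : (interior C).Nonempty)
    (hClines : C ∩ (-C) = {0})
    (c : Fin (q + 1) → ℝ) (hc : c ∈ interior C) (hcq : c (Fin.last q) = 1)
    (P : Matrix (Fin (q + 1)) (Fin d) ℝ) (B : Matrix (Fin m) (Fin d) ℝ) (b : Fin m → ℝ)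
    (S : Set (Fin d → ℝ)) (hS : S = {x | ∀ i, b i ≤ (B *ᵥ x) i}) (hSne : S.Nonempty)
    (Pimg : Set (Fin (q + 1) → ℝ)) (hPimg : Pimg = (fun x => P *ᵥ x) '' S + C)
    (Z : (Fin (q + 1) → ℝ) → EReal) (hZ : Z = suppF (-Pimg))
    (T : Set ((Fin m → ℝ) × (Fin (q + 1) → ℝ)))
    (hT : T = {p | (∀ j, 0 ≤ p.1 j) ∧ Bᵀ *ᵥ p.1 = Pᵀ *ᵥ p.2 ∧ c ⬝ᵥ p.2 = 1 ∧
      ∀ y ∈ C, 0 ≤ p.2 ⬝ᵥ y})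
    (Dstar : Set (Fin (q + 1) → ℝ))
    (hD : Dstar = {v | ∃ p ∈ T, ∃ lam : ℝ, 0 ≤ lam ∧
      v = (Fin.snoc (fun i : Fin q => p.2 i.castSucc) (b ⬝ᵥ p.1) : Fin (q + 1) → ℝ)
          - lam • (Pi.single (Fin.last q) 1 : Fin (q + 1) → ℝ)}) :
    Dstar = {w | Z (Fin.snoc (fun i : Fin q => w i.castSucc)
        (1 - ∑ i : Fin q, c i.castSucc * w i.castSucc) : Fin (q + 1) → ℝ)
      ≤ ((-(w (Fin.last q)) : ℝ) : EReal)} :=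
  stmt0_general q d m C hCpoly c hcq P B b S hS hSne Pimg hPimg Z hZ T hT Dstar hD
end

section
/- Let 𝒫 ⊆ ℝ^q be a nonempty convex set satisfying 𝒫 = 𝒫 + C for a cone C with nonempty interior, let c ∈ int C, and let Z(x) = sup{xᵀz : z ∈ −𝒫} be the support function of −𝒫. If w ∈ ℝ^q, w ≠ 0, and cᵀw ≤ 0, then Z(w) = +∞. -/
open Matrix Pointwise

/-- if `𝒫` is a nonempty convex set with `𝒫 + C = 𝒫` for a cone `C`
with nonempty interior, `c ∈ int C`, `w ≠ 0` and `cᵀw ≤ 0`, then the support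
function `Z` of `−𝒫` satisfies `Z(w) = +∞`. -/
theorem stmt1 (q : ℕ) (Pup C : Set (Fin q → ℝ))
    (hPne : Pup.Nonempty) (hPconv : Convex ℝ Pup)
    (hCcone : ∀ (r : ℝ), 0 ≤ r → ∀ x ∈ C, r • x ∈ C)
    (hCint : (interior C).Nonempty)
    (hPC : Pup + C = Pup)
    (c : Fin q → ℝ) (hc : c ∈ interior C)
    (w : Fin q → ℝ) (hw : w ≠ 0) (hcw : c ⬝ᵥ w ≤ 0) :
    suppF (-Pup) w = ⊤ := by
  obtain ⟨x, hx⟩ := hPne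
  -- find δ > 0 with c - δ • w ∈ C
  obtain ⟨ε, hε, hball⟩ := Metric.isOpen_iff.1 isOpen_interior c hc
  set δ : ℝ := ε / (‖w‖ + 1) with hδdef
  have hwn : (0:ℝ) < ‖w‖ + 1 := by positivity
  have hδ : 0 < δ := by positivity
  have hd : c - δ • w ∈ C := by
    apply interior_subset
    apply hball
    rw [Metric.mem_ball, dist_eq_norm]
    have : c - δ • w - c = -(δ • w) := by abel
    rw [this, norm_neg, norm_smul, Real.norm_eq_abs, abs_of_pos hδ]
    calc δ * ‖w‖ < δ * (‖w‖ + 1) := by nlinarith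
      _ = ε := div_mul_cancel₀ _ hwn.ne'
  set d : Fin q → ℝ := c - δ • w with hddef
  have hww : 0 < w ⬝ᵥ w := by
    have hnn : 0 ≤ w ⬝ᵥ w := Finset.sum_nonneg fun i _ => mul_self_nonneg _
    rcases hnn.lt_or_eq with h | h
    · exact h
    · exact absurd ((dotProduct_self_eq_zero).1 h.symm) hw
  have hwd : w ⬝ᵥ d < 0 := by
    have : w ⬝ᵥ d = w ⬝ᵥ c - δ * (w ⬝ᵥ w) := by
      simp [hddef, dotProduct_sub, dotProduct_smul, smul_eq_mul]
    rw [this, dotProduct_comm w c]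
    nlinarith
  set p : ℝ := -(w ⬝ᵥ d) with hpdef
  have hp : 0 < p := by simp [hpdef]; linarith
  rw [suppF, sSup_eq_top]
  intro b hb
  obtain ⟨r, hbr, -⟩ := EReal.exists_between_coe_real hb
  set lam : ℝ := max 0 ((r + w ⬝ᵥ x + 1) / p) with hlam
  have hlam0 : 0 ≤ lam := le_max_left _ _
  have hmem : x + lam • d ∈ Pup := by
    rw [← hPC]
    exact Set.add_mem_add hx (hCcone lam hlam0 d hd)
  refine ⟨_, ⟨-(x + lam • d), by simpa using hmem, rfl⟩, ?_⟩
  refine lt_trans hbr ?_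
  rw [EReal.coe_lt_coe_iff]
  have hval : w ⬝ᵥ (-(x + lam • d)) = -(w ⬝ᵥ x) + lam * p := by
    simp [hpdef, dotProduct_add, dotProduct_smul, smul_eq_mul, dotProduct_neg]
    ring
  rw [hval]
  have h1 : (r + w ⬝ᵥ x + 1) / p ≤ lam := le_max_right _ _
  have h2 : (r + w ⬝ᵥ x + 1) / p * p ≤ lam * p := by nlinarith
  rw [div_mul_cancel₀ _ hp.ne'] at h2
  linarith
end

section
/- Let 𝒫 ⊆ ℝ^q be nonempty with 𝒫 = 𝒫 + C for a polyhedral cone C with nonempty interior containing no lines, let c ∈ int C with c_q = 1, and let Z be the support function of −𝒫. Suppose w ∈ ℝ^q satisfies cᵀw > 0 and Z(w) < ∞. If 𝒟* denotes the set {v ∈ ℝ^q : −v_q ≥ Z(v_1,…,v_{q−1}, 1 − Σ_{i=1}^{q−1} c_i v_i)}, then Z(w) = − sup{ y ∈ ℝ : (1/cᵀw)(w_1,…,w_{q−1}, y) ∈ 𝒟* }. -/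
open Matrix Pointwise

/-!
The support function is positively homogeneous, so `Z(w) ≤ -y` is equivalent to
`Z(w / cᵀw) ≤ -y / cᵀw`. Since `c_q = 1`, the point at which the definition of `𝒟*`
evaluates `Z` for `v = (1/cᵀw)(w_1,…,w_{q-1}, y)` is `w / cᵀw`, whatever `y` is. Hence the
admissible `y` form the half-line `y ≤ -Z(w)`, whose supremum is `-Z(w)`.
-/

theorem suppF_ne_bot {n : ℕ} {A : Set (Fin n → ℝ)} (hA : A.Nonempty) (x : Fin n → ℝ) :
    suppF A x ≠ ⊥ := by
  obtain ⟨z, hz⟩ := hA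
  exact ne_bot_of_le_ne_bot (EReal.coe_ne_bot (x ⬝ᵥ z)) (le_sSup ⟨z, hz, rfl⟩)

theorem suppF_smul_le_coe_mul_iff {n : ℕ} (A : Set (Fin n → ℝ)) {t : ℝ} (ht : 0 < t)
    (x : Fin n → ℝ) (s : ℝ) :
    suppF A (t • x) ≤ ((t * s : ℝ) : EReal) ↔ suppF A x ≤ (s : EReal) := by
  simp only [suppF, sSup_le_iff, Set.forall_mem_image, smul_dotProduct, smul_eq_mul,
    EReal.coe_le_coe_iff, mul_le_mul_iff_right₀ ht]

theorem snoc_one_sub_sum_smul_snoc {q : ℕ} {c w : Fin (q + 1) → ℝ}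
    (hcq : c (Fin.last q) = 1) {t : ℝ} (ht : t * (c ⬝ᵥ w) = 1) (y : ℝ) :
    (Fin.snoc (fun i : Fin q => (t • (Fin.snoc (fun i : Fin q => w i.castSucc) y :
        Fin (q + 1) → ℝ)) i.castSucc)
      (1 - ∑ i : Fin q, c i.castSucc * (t • (Fin.snoc (fun i : Fin q => w i.castSucc) y :
        Fin (q + 1) → ℝ)) i.castSucc) : Fin (q + 1) → ℝ) = t • w := by
  have hdot : c ⬝ᵥ w = ∑ i : Fin q, c i.castSucc * w i.castSucc + w (Fin.last q) := by
    simp [dotProduct, Fin.sum_univ_castSucc, hcq]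
  funext j
  refine Fin.lastCases ?_ (fun i => ?_) j
  · simp only [Fin.snoc_last, Fin.snoc_castSucc, Pi.smul_apply, smul_eq_mul]
    rw [← ht, hdot, mul_add, Finset.mul_sum]
    simp only [mul_left_comm]
    ring
  · simp [Fin.snoc_castSucc]

theorem sSup_coe_image_Iic (a : ℝ) :
    sSup ((fun y : ℝ => (y : EReal)) '' Set.Iic a) = (a : EReal) :=
  (EReal.coe_strictMono.monotone.map_isGreatest isGreatest_Iic).csSup_eq

theorem stmt2_general (q : ℕ) (Pup : Set (Fin (q + 1) → ℝ))
    (hPne : Pup.Nonempty)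
    (c : Fin (q + 1) → ℝ) (hcq : c (Fin.last q) = 1)
    (Z : (Fin (q + 1) → ℝ) → EReal) (hZ : Z = suppF (-Pup))
    (Dstar : Set (Fin (q + 1) → ℝ))
    (hD : Dstar = {v | Z (Fin.snoc (fun i : Fin q => v i.castSucc)
        (1 - ∑ i : Fin q, c i.castSucc * v i.castSucc) : Fin (q + 1) → ℝ)
      ≤ ((-(v (Fin.last q)) : ℝ) : EReal)})
    (w : Fin (q + 1) → ℝ) (hcw : 0 < c ⬝ᵥ w) (hfin : Z w < ⊤) :
    Z w = -sSup ((fun y : ℝ => (y : EReal)) ''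
      {y : ℝ | (c ⬝ᵥ w)⁻¹ •
        (Fin.snoc (fun i : Fin q => w i.castSucc) y : Fin (q + 1) → ℝ) ∈ Dstar}) := by
  subst hZ hD
  have hbot : suppF (-Pup) w ≠ ⊥ := suppF_ne_bot hPne.neg w
  obtain ⟨r, hr⟩ : ∃ r : ℝ, suppF (-Pup) w = r := ⟨_, (EReal.coe_toReal hfin.ne hbot).symm⟩
  have hset : {y : ℝ | (c ⬝ᵥ w)⁻¹ •
        (Fin.snoc (fun i : Fin q => w i.castSucc) y : Fin (q + 1) → ℝ) ∈
        {v | suppF (-Pup) (Fin.snoc (fun i : Fin q => v i.castSucc)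
          (1 - ∑ i : Fin q, c i.castSucc * v i.castSucc) : Fin (q + 1) → ℝ)
          ≤ ((-(v (Fin.last q)) : ℝ) : EReal)}} = Set.Iic (-r) := by
    ext y
    rw [Set.mem_ofPred_eq, Set.mem_ofPred_eq,
      snoc_one_sub_sum_smul_snoc hcq (inv_mul_cancel₀ hcw.ne') y, Pi.smul_apply, Fin.snoc_last,
      smul_eq_mul, ← mul_neg, suppF_smul_le_coe_mul_iff _ (inv_pos.mpr hcw), hr,
      EReal.coe_le_coe_iff, Set.mem_Iic, le_neg]
  rw [hset, sSup_coe_image_Iic, hr, ← EReal.coe_neg, neg_neg]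

/-- recovering the support function `Z` of `−𝒫` from the dual lower
image `𝒟* = {v : −v_q ≥ Z(v_1,…,v_{q−1}, 1 − Σ c_i v_i)}`: if `cᵀw > 0` and
`Z(w) < ∞`, then `Z(w) = −sup{y ∈ ℝ : (1/cᵀw)(w_1,…,w_{q−1},y) ∈ 𝒟*}`.
The value space has dimension `q + 1` (the paper's `q`). -/
theorem stmt2 (q : ℕ) (Pup C : Set (Fin (q + 1) → ℝ))
    (hPne : Pup.Nonempty)
    (hCpoly : ∃ (k : ℕ) (v : Fin k → (Fin (q + 1) → ℝ)),
      C = {x | ∃ lam : Fin k → ℝ, (∀ i, 0 ≤ lam i) ∧ x = ∑ i, lam i • v i})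
    (hCint : (interior C).Nonempty)
    (hClines : C ∩ (-C) = {0})
    (hPC : Pup + C = Pup)
    (c : Fin (q + 1) → ℝ) (hc : c ∈ interior C) (hcq : c (Fin.last q) = 1)
    (Z : (Fin (q + 1) → ℝ) → EReal) (hZ : Z = suppF (-Pup))
    (Dstar : Set (Fin (q + 1) → ℝ))
    (hD : Dstar = {v | Z (Fin.snoc (fun i : Fin q => v i.castSucc)
        (1 - ∑ i : Fin q, c i.castSucc * v i.castSucc) : Fin (q + 1) → ℝ)
      ≤ ((-(v (Fin.last q)) : ℝ) : EReal)})
    (w : Fin (q + 1) → ℝ) (hcw : 0 < c ⬝ᵥ w) (hfin : Z w < ⊤) :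
    Z w = -sSup ((fun y : ℝ => (y : EReal)) ''
      {y : ℝ | (c ⬝ᵥ w)⁻¹ •
        (Fin.snoc (fun i : Fin q => w i.castSucc) y : Fin (q + 1) → ℝ) ∈ Dstar}) :=
  stmt2_general q Pup hPne c hcq Z hZ Dstar hD w hcw hfin
end

section
/- Primal construction for European superhedging: in the Kabanov model on a finite tree, define 𝒵_T^ω = ξ^ω + 𝒦_T^ω for each terminal node ω, and, backwards in time, 𝒲_t^ω = ⋂_{ω' ∈ succ(ω)} 𝒵_{t+1}^{ω'} and 𝒵_t^ω = 𝒲_t^ω + 𝒦_t^ω. Then for every time t and node ω, 𝒵_t^ω equals the set of portfolios z ∈ ℝ^d such that there exists a self-financing strategy (y_s)_{s=t}^T on the subtree rooted at ω with y_t = z and y_T − ξ ∈ 𝒦_T. In particular, 𝒵_0 is the set of superhedging portfolios for ξ. -/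
/-!
Backward dynamic programming. At a terminal node a portfolio superhedges exactly when it lies in
`ξ + 𝒦_T`. At a node `ω` of time `t < T`, a superhedging strategy from `z` moves to a single
portfolio `w = y_{t+1}` on all successors (predictability), must superhedge from `w` on each
successor subtree, and pays `z - w ∈ 𝒦_t`. Conversely, strategies from `w` on the successor
subtrees, chosen per successor atom, glue into one strategy on the subtree at `ω`. So the sets of
superhedging portfolios obey the same recursion as `𝒵`, and the two agree by backward induction.
-/

open Pointwise

namespace KabanovTree

variable {Ω E : Type*}

/-- `part t ω` is the atom of `ℱ_t` containing `ω`, and the atoms refine as `t` grows. -/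
structure IsRefiningPartition (part : ℕ → Ω → Finset Ω) : Prop where
  mem_self : ∀ t ω, ω ∈ part t ω
  eq_of_mem : ∀ t ω ω', ω' ∈ part t ω → part t ω' = part t ω
  succ_subset : ∀ t ω, part (t + 1) ω ⊆ part t ω

namespace IsRefiningPartition

variable {part : ℕ → Ω → Finset Ω}

theorem subset_of_le (hP : IsRefiningPartition part) {t s : ℕ} (hts : t ≤ s) (ω : Ω) :
    part s ω ⊆ part t ω :=
  antitone_nat_of_succ_le (f := fun n => part n ω) (fun n => hP.succ_subset n ω) hts

theorem succ_subset_of_mem (hP : IsRefiningPartition part) {t : ℕ} {ω ρ : Ω}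
    (hρ : ρ ∈ part t ω) : part (t + 1) ρ ⊆ part t ω :=
  hP.eq_of_mem t ω ρ hρ ▸ hP.succ_subset t ρ

end IsRefiningPartition

variable [AddCommGroup E] (part : ℕ → Ω → Finset Ω) (𝒦 : ℕ → Ω → Set E) (ξ : Ω → E) (T : ℕ)

def IsSuperhedgingStrategy (t : ℕ) (A : Finset Ω) (z : E) (y : ℕ → Ω → E) : Prop :=
  (∀ ω ∈ A, y t ω = z) ∧
  (∀ s, t ≤ s → s < T → ∀ ω ∈ A, ∀ ω' ∈ part s ω, y (s + 1) ω' = y (s + 1) ω) ∧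
  (∀ s, t ≤ s → s < T → ∀ ω ∈ A, y s ω - y (s + 1) ω ∈ 𝒦 s ω) ∧
  (∀ ω ∈ A, y T ω - ξ ω ∈ 𝒦 T ω)

def superhedgingSet (t : ℕ) (ω : Ω) : Set E :=
  {z | ∃ y, IsSuperhedgingStrategy part 𝒦 ξ T t (part t ω) z y}

variable {part 𝒦 ξ T}

theorem superhedgingSet_terminal (hpartT : ∀ ω, part T ω = {ω}) (ω : Ω) :
    superhedgingSet part 𝒦 ξ T T ω = {ξ ω} + 𝒦 T ω := by
  ext z
  simp only [superhedgingSet, IsSuperhedgingStrategy, hpartT, Finset.mem_singleton,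
    forall_eq, Set.singleton_add, Set.mem_ofPred_eq]
  constructor
  · rintro ⟨y, hyz, -, -, hξ⟩
    exact ⟨z - ξ ω, hyz ▸ hξ, add_sub_cancel _ _⟩
  · rintro ⟨k, hk, rfl⟩
    refine ⟨fun _ _ => ξ ω + k, rfl, fun s hs hsT => absurd hsT hs.not_gt,
      fun s hs hsT => absurd hsT hs.not_gt, ?_⟩
    simpa using hk

theorem IsSuperhedgingStrategy.restrict_succ (hP : IsRefiningPartition part) {t : ℕ} {ω ρ : Ω}
    {z : E} {y : ℕ → Ω → E} (hy : IsSuperhedgingStrategy part 𝒦 ξ T t (part t ω) z y)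
    (ht : t < T) (hρ : ρ ∈ part t ω) :
    IsSuperhedgingStrategy part 𝒦 ξ T (t + 1) (part (t + 1) ρ) (y (t + 1) ω) y := by
  obtain ⟨-, hadapt, hfin, hξ⟩ := hy
  have hsub := hP.succ_subset_of_mem hρ
  exact ⟨fun ρ' hρ' => hadapt t le_rfl ht ω (hP.mem_self t ω) ρ' (hsub hρ'),
    fun s hs hsT ρ' hρ' => hadapt s (Nat.le_of_succ_le hs) hsT ρ' (hsub hρ'),
    fun s hs hsT ρ' hρ' => hfin s (Nat.le_of_succ_le hs) hsT ρ' (hsub hρ'),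
    fun ρ' hρ' => hξ ρ' (hsub hρ')⟩

/-- The strategies `Y A` are indexed by the successor atom `A` rather than by a state, so that
the glued strategy is automatically predictable. -/
theorem isSuperhedgingStrategy_glue (hP : IsRefiningPartition part)
    (h𝒦adapt : ∀ t ω ω', ω' ∈ part t ω → 𝒦 t ω' = 𝒦 t ω) {t : ℕ} {ω : Ω} {z w : E}
    {Y : Finset Ω → ℕ → Ω → E}
    (hY : ∀ ρ ∈ part t ω,
      IsSuperhedgingStrategy part 𝒦 ξ T (t + 1) (part (t + 1) ρ) w (Y (part (t + 1) ρ)))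
    (hk : z - w ∈ 𝒦 t ω) (ht : t < T) :
    IsSuperhedgingStrategy part 𝒦 ξ T t (part t ω) z
      (fun s ρ => if s ≤ t then z else Y (part (t + 1) ρ) s ρ) := by
  have hstart : ∀ ρ ∈ part t ω, Y (part (t + 1) ρ) (t + 1) ρ = w :=
    fun ρ hρ => (hY ρ hρ).1 ρ (hP.mem_self _ ρ)
  refine ⟨fun ρ _ => if_pos le_rfl, ?_, ?_, ?_⟩
  · intro s hs hsT ρ hρ ρ' hρ'
    simp only [show ¬s + 1 ≤ t by omega, if_false]
    rcases hs.eq_or_lt with rfl | hts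
    · rw [hstart ρ hρ, hstart ρ' (hP.eq_of_mem t ω ρ hρ ▸ hρ')]
    · have hρ't : ρ' ∈ part (t + 1) ρ := hP.subset_of_le hts ρ hρ'
      rw [hP.eq_of_mem _ ρ ρ' hρ't]
      exact (hY ρ hρ).2.1 s hts hsT ρ (hP.mem_self _ ρ) ρ' hρ'
  · intro s hs hsT ρ hρ
    rcases hs.eq_or_lt with rfl | hts
    · simp only [le_rfl, if_true, show ¬t + 1 ≤ t by omega, if_false, hstart ρ hρ]
      exact h𝒦adapt t ω ρ hρ ▸ hk
    · simp only [show ¬s ≤ t by omega, show ¬s + 1 ≤ t by omega, if_false]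
      exact (hY ρ hρ).2.2.1 s hts hsT ρ (hP.mem_self _ ρ)
  · intro ρ hρ
    simp only [show ¬T ≤ t by omega, if_false]
    exact (hY ρ hρ).2.2.2 ρ (hP.mem_self _ ρ)

theorem superhedgingSet_of_lt (hP : IsRefiningPartition part)
    (h𝒦adapt : ∀ t ω ω', ω' ∈ part t ω → 𝒦 t ω' = 𝒦 t ω) {t : ℕ} (ht : t < T) (ω : Ω) :
    superhedgingSet part 𝒦 ξ T t ω =
      (⋂ ρ ∈ part t ω, superhedgingSet part 𝒦 ξ T (t + 1) ρ) + 𝒦 t ω := by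
  ext z
  simp only [superhedgingSet, Set.mem_add, Set.mem_iInter₂, Set.mem_ofPred_eq]
  constructor
  · rintro ⟨y, hy⟩
    refine ⟨y (t + 1) ω, fun ρ hρ => ⟨y, hy.restrict_succ hP ht hρ⟩, z - y (t + 1) ω, ?_,
      add_sub_cancel _ _⟩
    have hself := hy.2.2.1 t le_rfl ht ω (hP.mem_self t ω)
    rwa [hy.1 ω (hP.mem_self t ω)] at hself
  · rintro ⟨w, hw, k, hk, rfl⟩
    have hchoice : ∀ A : Finset Ω, ∃ Y, ∀ ρ ∈ part t ω, part (t + 1) ρ = A →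
        IsSuperhedgingStrategy part 𝒦 ξ T (t + 1) A w Y := by
      intro A
      by_cases hA : ∃ ρ ∈ part t ω, part (t + 1) ρ = A
      · obtain ⟨ρ, hρ, rfl⟩ := hA
        obtain ⟨Y, hY⟩ := hw ρ hρ
        exact ⟨Y, fun ρ' _ hρ' => hρ' ▸ hY⟩
      · exact ⟨0, fun ρ hρ hρA => absurd ⟨ρ, hρ, hρA⟩ hA⟩
    choose Y hY using hchoice
    exact ⟨_, isSuperhedgingStrategy_glue hP h𝒦adapt (fun ρ hρ => hY _ ρ hρ rfl)
      (by simpa using hk) ht⟩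

end KabanovTree

open KabanovTree in
theorem stmt8_general (d T : ℕ) (Ω : Type)
    (part : ℕ → Ω → Finset Ω)
    (hmem : ∀ t ω, ω ∈ part t ω)
    (hcong : ∀ t ω ω', ω' ∈ part t ω → part t ω' = part t ω)
    (hrefine : ∀ t ω, part (t + 1) ω ⊆ part t ω)
    (hpartT : ∀ ω, part T ω = {ω})
    (𝒦 : ℕ → Ω → Set (Fin d → ℝ))
    (h𝒦adapt : ∀ t ω ω', ω' ∈ part t ω → 𝒦 t ω' = 𝒦 t ω)
    (ξ : Ω → Fin d → ℝ)
    (𝒵 𝒲 : ℕ → Ω → Set (Fin d → ℝ))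
    (hZT : ∀ ω, 𝒵 T ω = {ξ ω} + 𝒦 T ω)
    (hW : ∀ t, t < T → ∀ ω, 𝒲 t ω = ⋂ ω' ∈ part t ω, 𝒵 (t + 1) ω')
    (hZ : ∀ t, t < T → ∀ ω, 𝒵 t ω = 𝒲 t ω + 𝒦 t ω) :
    ∀ t, t ≤ T → ∀ ω, 𝒵 t ω = {z : Fin d → ℝ | ∃ y : ℕ → Ω → Fin d → ℝ,
      (∀ ω' ∈ part t ω, y t ω' = z) ∧
      (∀ s, t ≤ s → s < T → ∀ ω' ∈ part t ω, ∀ ω'' ∈ part s ω', y (s + 1) ω'' = y (s + 1) ω') ∧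
      (∀ s, t ≤ s → s < T → ∀ ω' ∈ part t ω, y s ω' - y (s + 1) ω' ∈ 𝒦 s ω') ∧
      (∀ ω' ∈ part t ω, y T ω' - ξ ω' ∈ 𝒦 T ω')} := by
  have hP : IsRefiningPartition part := ⟨hmem, hcong, hrefine⟩
  intro t ht
  change ∀ ω, 𝒵 t ω = superhedgingSet part 𝒦 ξ T t ω
  induction ht using Nat.decreasingInduction with
  | self => exact fun ω => (hZT ω).trans (superhedgingSet_terminal hpartT ω).symm
  | of_succ t ht ih =>
    intro ω
    simp only [hZ t ht ω, hW t ht ω, ih, superhedgingSet_of_lt hP h𝒦adapt ht ω]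

/-- primal construction. On a finite event tree (nodes encoded as
the atoms `part t ω` of the filtration), with `𝒵_T = ξ + 𝒦_T`,
`𝒲_t = ⋂_{ω' ∈ succ} 𝒵_{t+1}` and `𝒵_t = 𝒲_t + 𝒦_t`, the set `𝒵_t` at each node
equals the set of portfolios from which the option `ξ` can be superhedged by a
self-financing strategy on the subtree rooted at that node. In particular
(taking `t = 0`), `𝒵_0` is the set of superhedging portfolios for `ξ`. -/
theorem stmt8 (d T : ℕ) (Ω : Type) [Fintype Ω] [DecidableEq Ω]
    (part : ℕ → Ω → Finset Ω)
    (hmem : ∀ t ω, ω ∈ part t ω)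
    (hcong : ∀ t ω ω', ω' ∈ part t ω → part t ω' = part t ω)
    (hrefine : ∀ t ω, part (t + 1) ω ⊆ part t ω)
    (hpart0 : ∀ ω, part 0 ω = Finset.univ)
    (hpartT : ∀ ω, part T ω = {ω})
    (𝒦 : ℕ → Ω → Set (Fin d → ℝ))
    (h𝒦adapt : ∀ t ω ω', ω' ∈ part t ω → 𝒦 t ω' = 𝒦 t ω)
    (h𝒦cone : ∀ t ω, Convex ℝ (𝒦 t ω) ∧ ∀ (r : ℝ), 0 ≤ r → ∀ k ∈ 𝒦 t ω, r • k ∈ 𝒦 t ω)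
    (ξ : Ω → Fin d → ℝ)
    (𝒵 𝒲 : ℕ → Ω → Set (Fin d → ℝ))
    (hZT : ∀ ω, 𝒵 T ω = {ξ ω} + 𝒦 T ω)
    (hW : ∀ t, t < T → ∀ ω, 𝒲 t ω = ⋂ ω' ∈ part t ω, 𝒵 (t + 1) ω')
    (hZ : ∀ t, t < T → ∀ ω, 𝒵 t ω = 𝒲 t ω + 𝒦 t ω) :
    ∀ t, t ≤ T → ∀ ω, 𝒵 t ω = {z : Fin d → ℝ | ∃ y : ℕ → Ω → Fin d → ℝ,
      (∀ ω' ∈ part t ω, y t ω' = z) ∧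
      (∀ s, t ≤ s → s < T → ∀ ω' ∈ part t ω, ∀ ω'' ∈ part s ω', y (s + 1) ω'' = y (s + 1) ω') ∧
      (∀ s, t ≤ s → s < T → ∀ ω' ∈ part t ω, y s ω' - y (s + 1) ω' ∈ 𝒦 s ω') ∧
      (∀ ω' ∈ part t ω, y T ω' - ξ ω' ∈ 𝒦 T ω')} :=
  stmt8_general d T Ω part hmem hcong hrefine hpartT 𝒦 h𝒦adapt ξ 𝒵 𝒲 hZT hW hZ
end

section
/- With 𝒵_0 the set of superhedging portfolios (a closed convex set in ℝ^d with 𝒵_0 + 𝒦_0 = 𝒵_0) and Z_0 its negative's support function Z_0(x) = sup{xᵀz : z ∈ −𝒵_0}, the ask price of the option in asset i satisfies π_i^a(ξ) := min{x ∈ ℝ : x e^i ∈ 𝒵_0} = −min{Z_0(x) : x ∈ ℝ^d, x_i = 1}, provided both extrema exist and are finite. -/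
/-!
Weak duality is immediate: if `a eⁱ ∈ 𝒵₀` and `xᵢ = 1`, then `-a = xᵀ(-a eⁱ) ≤ Z₀(x)`.
For the converse, if `t eⁱ ∉ 𝒵₀`, strictly separate `t eⁱ` from `𝒵₀` by a vector `y`.
Since `𝒵₀` absorbs the nonnegative orthant it is an upper set, so `y ⬝ᵥ ·` can only be
bounded below on it if `y ≥ 0`; and `yᵢ > 0` because `y` separates `t eⁱ` from `a eⁱ ∈ 𝒵₀`.
Normalizing `yᵢ = 1` gives `Z₀(y) < -t`, so no `t < -min Z₀` lies in the half-line `{x : x eⁱ ∈ 𝒵₀}`.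
-/

open Matrix Pointwise

theorem suppF_le_iff {n : ℕ} {A : Set (Fin n → ℝ)} {x : Fin n → ℝ} {c : EReal} :
    suppF A x ≤ c ↔ ∀ z ∈ A, ((x ⬝ᵥ z : ℝ) : EReal) ≤ c := by
  simp only [suppF, sSup_le_iff, Set.forall_mem_image]

theorem exists_dotProduct_separation {n : ℕ} {A : Set (Fin n → ℝ)} (hconv : Convex ℝ A)
    (hcl : IsClosed A) {p : Fin n → ℝ} (hp : p ∉ A) :
    ∃ (y : Fin n → ℝ) (u : ℝ), y ⬝ᵥ p < u ∧ ∀ z ∈ A, u < y ⬝ᵥ z := by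
  obtain ⟨f, u, hfp, hfA⟩ := geometric_hahn_banach_point_closed hconv hcl hp
  have hf : ∀ z, f z = (dotProductEquiv ℝ (Fin n)).symm f ⬝ᵥ z := fun z =>
    (LinearMap.congr_fun ((dotProductEquiv ℝ (Fin n)).apply_symm_apply (f : Module.Dual ℝ _)) z).symm
  exact ⟨_, u, hf p ▸ hfp, fun z hz => hf z ▸ hfA z hz⟩

theorem IsUpperSet.of_add_subset {α : Type*} [AddCommGroup α] [PartialOrder α]
    [IsOrderedAddMonoid α] {A K : Set α} (hK : Set.Ici 0 ⊆ K) (h : A + K ⊆ A) :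
    IsUpperSet A := fun a b hab ha => by
  simpa using h (Set.add_mem_add ha (hK (sub_nonneg.mpr hab)))

theorem IsUpperSet.nonneg_of_dotProduct_lowerBound {n : ℕ} {A : Set (Fin n → ℝ)}
    (hA : IsUpperSet A) (hne : A.Nonempty) {y : Fin n → ℝ} {u : ℝ}
    (hu : ∀ z ∈ A, u ≤ y ⬝ᵥ z) : 0 ≤ y := by
  intro j
  show 0 ≤ y j
  by_contra! hj
  obtain ⟨z, hz⟩ := hne
  -- moving from `z` by `t eʲ` lowers `y ⬝ᵥ ·` by `t |yⱼ| = y ⬝ᵥ z - u + 1`, below `u`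
  set t := (y ⬝ᵥ z - u + 1) / -y j
  have ht : 0 ≤ t := div_nonneg (by linarith [hu z hz]) (by linarith)
  have hmem : z + Pi.single j t ∈ A :=
    hA (le_add_of_nonneg_right (Pi.single_nonneg.mpr ht)) hz
  have := hu _ hmem
  rw [dotProduct_add, dotProduct_single] at this
  have : y j * t = -(y ⬝ᵥ z - u + 1) := by
    rw [← neg_neg (y j), neg_mul, mul_div_cancel₀ _ (neg_ne_zero.mpr hj.ne)]
  linarith

theorem neg_le_suppF_neg_of_single_mem {n : ℕ} {A : Set (Fin n → ℝ)} {y : Fin n → ℝ} {i : Fin n}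
    {a : ℝ} (hy : y i = 1) (ha : Pi.single i a ∈ A) : ((-a : ℝ) : EReal) ≤ suppF (-A) y :=
  le_sSup ⟨-Pi.single i a, by simpa using ha, by simp [dotProduct_single, hy]⟩

theorem exists_suppF_neg_lt_of_single_notMem {n : ℕ} {A : Set (Fin n → ℝ)} (hconv : Convex ℝ A)
    (hcl : IsClosed A) (hA : IsUpperSet A) {i : Fin n} {a t : ℝ} (ha : Pi.single i a ∈ A)
    (ht : Pi.single i t ∉ A) : ∃ y : Fin n → ℝ, y i = 1 ∧ suppF (-A) y < ((-t : ℝ) : EReal) := by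
  obtain ⟨y, u, hyt, hyA⟩ := exists_dotProduct_separation hconv hcl ht
  have hy0 : 0 ≤ y := hA.nonneg_of_dotProduct_lowerBound ⟨_, ha⟩ fun z hz => (hyA z hz).le
  rw [dotProduct_single] at hyt
  have hyi : 0 < y i := by
    refine (hy0 i).lt_of_ne' fun h => ?_
    have hya := hyA _ ha
    rw [dotProduct_single] at hya
    simp only [h, Pi.zero_apply, zero_mul] at hya hyt
    linarith
  refine ⟨(y i)⁻¹ • y, by simp [hyi.ne'], ?_⟩
  calc suppF (-A) ((y i)⁻¹ • y) ≤ ((-(u / y i) : ℝ) : EReal) := by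
        refine suppF_le_iff.mpr fun w hw => EReal.coe_le_coe_iff.mpr ?_
        have huw := hyA _ (Set.mem_neg.mp hw)
        rw [dotProduct_neg] at huw
        rw [smul_dotProduct, smul_eq_mul, inv_mul_eq_div, ← neg_div,
          div_le_div_iff_of_pos_right hyi]
        linarith
    _ < ((-t : ℝ) : EReal) := by
        rw [EReal.coe_lt_coe_iff, neg_lt_neg_iff, lt_div_iff₀ hyi]
        linarith

theorem stmt13_general (d : ℕ) (Z0set K0 : Set (Fin d → ℝ))
    (hcl : IsClosed Z0set) (hconv : Convex ℝ Z0set)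
    (hK0orth : ∀ v : Fin d → ℝ, (∀ k, 0 ≤ v k) → v ∈ K0)
    (hZK : Z0set + K0 = Z0set)
    (Z0 : (Fin d → ℝ) → EReal) (hZ0 : Z0 = suppF (-Z0set))
    (i : Fin d) (a m : ℝ)
    (ha : IsLeast {x : ℝ | (Pi.single i x : Fin d → ℝ) ∈ Z0set} a)
    (hm : IsLeast {r : EReal | ∃ x : Fin d → ℝ, x i = 1 ∧ Z0 x = r} ((m : ℝ) : EReal)) :
    a = -m := by
  subst hZ0
  have hup : IsUpperSet Z0set := .of_add_subset (fun v hv => hK0orth v hv) hZK.subset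
  refine le_antisymm ?_ ?_
  · by_contra! hlt
    obtain ⟨y, hyi, hy⟩ := exists_suppF_neg_lt_of_single_notMem hconv hcl hup ha.1
      (t := -m) fun hmem => hlt.not_ge (ha.2 hmem)
    rw [neg_neg] at hy
    exact (hm.2 ⟨y, hyi, rfl⟩).not_gt hy
  · obtain ⟨x, hxi, hxm⟩ := hm.1
    have := hxm ▸ neg_le_suppF_neg_of_single_mem hxi ha.1
    linarith [EReal.coe_le_coe_iff.mp this]

/-- with `𝒵₀` the (nonempty closed convex) set of superhedging
portfolios, `𝒵₀ + 𝒦₀ = 𝒵₀` for the solvency cone `𝒦₀` (which contains the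
nonnegative orthant), and `Z₀` the support function of `−𝒵₀`, the ask price
satisfies `min{x : x eⁱ ∈ 𝒵₀} = −min{Z₀(x) : xᵢ = 1}`, provided both extrema
exist and are finite. -/
theorem stmt13 (d : ℕ) (Z0set K0 : Set (Fin d → ℝ))
    (hne : Z0set.Nonempty) (hcl : IsClosed Z0set) (hconv : Convex ℝ Z0set)
    (hK0cone : ∀ (r : ℝ), 0 ≤ r → ∀ k ∈ K0, r • k ∈ K0)
    (hK0orth : ∀ v : Fin d → ℝ, (∀ k, 0 ≤ v k) → v ∈ K0)
    (hZK : Z0set + K0 = Z0set)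
    (Z0 : (Fin d → ℝ) → EReal) (hZ0 : Z0 = suppF (-Z0set))
    (i : Fin d) (a m : ℝ)
    (ha : IsLeast {x : ℝ | (Pi.single i x : Fin d → ℝ) ∈ Z0set} a)
    (hm : IsLeast {r : EReal | ∃ x : Fin d → ℝ, x i = 1 ∧ Z0 x = r} ((m : ℝ) : EReal)) :
    a = -m :=
  stmt13_general d Z0set K0 hcl hconv hK0orth hZK Z0 hZ0 i a m ha hm
end

section
/- In the Kabanov currency model, if there exists a probability measure ℚ equivalent to ℙ and an ℝ^d-valued ℚ-martingale S = (S_t)_{t=0}^T with S_t ∈ 𝒦_t⁺ \ {0} for all t, then the model admits no arbitrage opportunity, i.e. there is no self-financing strategy y with y_0 = 0 and y_T − x ∈ 𝒦_T for some nonzero x ∈ L^0(ℝ^d; ℱ_T) with nonnegative coordinates. -/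
open Matrix

private lemma sumDot15 {Ω : Type*} {d : ℕ} (s : Finset Ω) (f : Ω → Fin d → ℝ)
    (v : Fin d → ℝ) : (∑ a ∈ s, f a) ⬝ᵥ v = ∑ a ∈ s, f a ⬝ᵥ v := by
  simp only [dotProduct, Finset.sum_apply, Finset.sum_mul]
  rw [Finset.sum_comm]

/-- in the Kabanov model (finite tree, solvency cones generated
by `e¹,…,e^d` and `π jk • eʲ − eᵏ`), if there exists a probability measure `ℚ`
equivalent to `ℙ` (encoded by weights `q ω > 0` summing to `1`) and an adapted
`ℚ`-martingale `S` with `S_t ∈ 𝒦_t⁺ \ {0}` for all `t`, then there is no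
arbitrage opportunity: no self-financing strategy `y` with `y₀ = 0` and
`y_T − x ∈ 𝒦_T` for some nonzero nonnegative `x`. -/
theorem stmt15 (d T : ℕ) (Ω : Type) [Fintype Ω] [DecidableEq Ω]
    (part : ℕ → Ω → Finset Ω)
    (hmem : ∀ t ω, ω ∈ part t ω)
    (hcong : ∀ t ω ω', ω' ∈ part t ω → part t ω' = part t ω)
    (hrefine : ∀ t ω, part (t + 1) ω ⊆ part t ω)
    (hpart0 : ∀ ω, part 0 ω = Finset.univ)
    (hpartT : ∀ ω, part T ω = {ω})
    (π : ℕ → Ω → Fin d → Fin d → ℝ)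
    (hπpos : ∀ t ω j k, 0 < π t ω j k) (hπdiag : ∀ t ω j, π t ω j j = 1)
    (hπadapt : ∀ t ω ω', ω' ∈ part t ω → π t ω' = π t ω)
    (𝒦 : ℕ → Ω → Set (Fin d → ℝ))
    (h𝒦 : ∀ t ω, 𝒦 t ω = {x | ∃ (μ : Fin d → ℝ) (β : Fin d → Fin d → ℝ),
      (∀ k, 0 ≤ μ k) ∧ (∀ j k, 0 ≤ β j k) ∧
      x = (∑ k, μ k • (Pi.single k 1 : Fin d → ℝ))
        + ∑ j, ∑ k, β j k • (π t ω j k • (Pi.single j 1 : Fin d → ℝ)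
            - (Pi.single k 1 : Fin d → ℝ))})
    (q : Ω → ℝ) (hqpos : ∀ ω, 0 < q ω) (hqsum : (∑ ω, q ω) = 1)
    (S : ℕ → Ω → Fin d → ℝ)
    (hSadapt : ∀ t, t ≤ T → ∀ ω, ∀ ω' ∈ part t ω, S t ω' = S t ω)
    (hmart : ∀ t, t < T → ∀ ω,
      (∑ ω' ∈ part t ω, q ω' • S (t + 1) ω') = (∑ ω' ∈ part t ω, q ω') • S t ω)
    (hSdual : ∀ t, t ≤ T → ∀ ω, (∀ k ∈ 𝒦 t ω, 0 ≤ S t ω ⬝ᵥ k) ∧ S t ω ≠ 0) :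
    ¬ ∃ (y : ℕ → Ω → Fin d → ℝ) (x : Ω → Fin d → ℝ),
      (∀ ω, y 0 ω = 0) ∧
      (∀ t, t < T → ∀ ω, ∀ ω' ∈ part t ω, y (t + 1) ω' = y (t + 1) ω) ∧
      (∀ t, t < T → ∀ ω, y t ω - y (t + 1) ω ∈ 𝒦 t ω) ∧
      x ≠ 0 ∧ (∀ ω k, 0 ≤ x ω k) ∧
      (∀ ω, y T ω - x ω ∈ 𝒦 T ω) := by
  rintro ⟨y, x, hy0, hypred, hself, hxne, hxnn, hyT⟩
  -- generators belong to the cones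
  have hsingle : ∀ t ω k, (Pi.single k 1 : Fin d → ℝ) ∈ 𝒦 t ω := by
    intro t ω k
    rw [h𝒦]
    refine ⟨Pi.single k 1, 0, ?_, fun _ _ => le_refl 0, ?_⟩
    · intro k'
      rcases eq_or_ne k' k with h | h <;> simp [Pi.single_apply, h]
    · funext i
      simp [Pi.single_apply, Finset.sum_apply, mul_comm]
  have hpair : ∀ t ω j k,
      (π t ω j k • (Pi.single j 1 : Fin d → ℝ) - Pi.single k 1) ∈ 𝒦 t ω := by
    intro t ω j k
    rw [h𝒦]
    refine ⟨0, fun a b => if a = j ∧ b = k then 1 else 0,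
      fun _ => le_refl 0, ?_, ?_⟩
    · intro a b; dsimp only; split <;> norm_num
    · funext i
      simp only [Pi.zero_apply, zero_smul, Finset.sum_const_zero, zero_add,
        Finset.sum_apply, Pi.smul_apply, Pi.sub_apply, ite_smul, one_smul,
        zero_smul, smul_eq_mul]
      rw [Finset.sum_eq_single j, Finset.sum_eq_single k] <;>
        simp +contextual [Pi.single_apply, eq_comm]
  have hSnn : ∀ t, t ≤ T → ∀ ω k, 0 ≤ S t ω k := by
    intro t ht ω k
    have := (hSdual t ht ω).1 _ (hsingle t ω k)
    simpa using this
  have hSle : ∀ t, t ≤ T → ∀ ω j k, S t ω k ≤ π t ω j k * S t ω j := by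
    intro t ht ω j k
    have := (hSdual t ht ω).1 _ (hpair t ω j k)
    simp only [dotProduct_sub, dotProduct_smul, smul_eq_mul] at this
    have h1 : S t ω ⬝ᵥ (Pi.single j 1 : Fin d → ℝ) = S t ω j := by
      simp [dotProduct, Pi.single_apply, mul_comm]
    have h2 : S t ω ⬝ᵥ (Pi.single k 1 : Fin d → ℝ) = S t ω k := by
      simp [dotProduct, Pi.single_apply, mul_comm]
    rw [h1, h2] at this
    linarith
  have hSpos : ∀ t, t ≤ T → ∀ ω k, 0 < S t ω k := by
    intro t ht ω k
    rcases lt_or_eq_of_le (hSnn t ht ω k) with h | h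
    · exact h
    · exfalso
      apply (hSdual t ht ω).2
      funext j
      have := hSle t ht ω k j
      rw [← h] at this
      simp only [mul_zero] at this
      exact le_antisymm this (hSnn t ht ω j)
  -- dual pairing nonneg on cones
  have hdual : ∀ t, t ≤ T → ∀ ω v, v ∈ 𝒦 t ω → 0 ≤ S t ω ⬝ᵥ v :=
    fun t ht ω v hv => (hSdual t ht ω).1 v hv
  -- block symmetry
  have hsym : ∀ t ω ω', ω' ∈ part t ω → ω ∈ part t ω' := by
    intro t ω ω' h
    rw [hcong t ω ω' h]
    exact hmem t ω
  set Q : ℕ → Ω → ℝ := fun t ω => ∑ ω' ∈ part t ω, q ω' with hQ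
  have hQpos : ∀ t ω, 0 < Q t ω := by
    intro t ω
    exact Finset.sum_pos (fun ω' _ => hqpos ω') ⟨ω, hmem t ω⟩
  have hQcong : ∀ t ω ω', ω' ∈ part t ω → Q t ω' = Q t ω := by
    intro t ω ω' h
    simp only [hQ]
    rw [hcong t ω ω' h]
  -- if all block averages vanish, the global sum vanishes
  have hfub : ∀ t (g : Ω → ℝ), (∀ ω, ∑ ω' ∈ part t ω, g ω' = 0) →
      ∑ ω, g ω = 0 := by
    intro t g hg
    have key : ∑ ω, (q ω / Q t ω) * ∑ ω' ∈ part t ω, g ω' = ∑ ω, g ω := by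
      have : ∀ ω, (q ω / Q t ω) * ∑ ω' ∈ part t ω, g ω'
          = ∑ ω' ∈ part t ω, (q ω / Q t ω) * g ω' := fun ω => Finset.mul_sum _ _ _
      rw [Finset.sum_congr rfl fun ω _ => this ω]
      rw [Finset.sum_comm' (s := Finset.univ) (t := fun ω => part t ω)
        (s' := fun ω' => part t ω') (t' := Finset.univ)
        (by intro a b
            constructor
            · rintro ⟨-, h⟩; exact ⟨hsym t a b h, Finset.mem_univ _⟩
            · rintro ⟨h, -⟩; exact ⟨Finset.mem_univ _, hsym t b a h⟩)]
      refine Finset.sum_congr rfl fun ω' _ => ?_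
      have : ∑ ω ∈ part t ω', q ω / Q t ω * g ω'
          = ∑ ω ∈ part t ω', q ω / Q t ω' * g ω' := by
        refine Finset.sum_congr rfl fun ω h => ?_
        rw [hQcong t ω' ω h]
      rw [this, ← Finset.sum_mul, ← Finset.sum_div]
      have : (∑ ω ∈ part t ω', q ω) = Q t ω' := rfl
      rw [this, div_self (hQpos t ω').ne']
      ring
    rw [← key]
    simp only [hg, mul_zero, Finset.sum_const_zero]
  -- martingale step
  have hstep : ∀ t, t < T →
      ∑ ω, q ω * (S (t + 1) ω ⬝ᵥ y (t + 1) ω)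
        = ∑ ω, q ω * (S t ω ⬝ᵥ y (t + 1) ω) := by
    intro t ht
    have := hfub t (fun ω => q ω * (S (t + 1) ω ⬝ᵥ y (t + 1) ω)
      - q ω * (S t ω ⬝ᵥ y (t + 1) ω)) (by
        intro ω
        have e1 : ∀ ω' ∈ part t ω,
            q ω' * (S (t + 1) ω' ⬝ᵥ y (t + 1) ω')
              - q ω' * (S t ω' ⬝ᵥ y (t + 1) ω')
            = (q ω' • S (t + 1) ω') ⬝ᵥ y (t + 1) ω
              - (q ω' * (S t ω ⬝ᵥ y (t + 1) ω)) := by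
          intro ω' h
          rw [hypred t ht ω ω' h, hSadapt t (le_of_lt ht) ω ω' h,
            smul_dotProduct, smul_eq_mul]
        rw [Finset.sum_congr rfl e1, Finset.sum_sub_distrib,
          ← sumDot15, hmart t ht ω, ← Finset.sum_mul,
          smul_dotProduct, smul_eq_mul, sub_self]
        )
    rw [Finset.sum_sub_distrib] at this
    linarith
  -- value process is nonincreasing in expectation
  have hA : ∀ t, t ≤ T → ∑ ω, q ω * (S t ω ⬝ᵥ y t ω) ≤ 0 := by
    intro t
    induction t with
    | zero =>
      intro _
      simp [hy0]
    | succ t ih =>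
      intro ht
      have ht' : t < T := lt_of_lt_of_le (Nat.lt_succ_self t) ht
      rw [hstep t ht']
      have hle : ∀ ω, q ω * (S t ω ⬝ᵥ y (t + 1) ω)
          ≤ q ω * (S t ω ⬝ᵥ y t ω) := by
        intro ω
        have h0 := hdual t (le_of_lt ht') ω _ (hself t ht' ω)
        rw [dotProduct_sub] at h0
        have := hqpos ω
        nlinarith
      calc ∑ ω, q ω * (S t ω ⬝ᵥ y (t + 1) ω)
          ≤ ∑ ω, q ω * (S t ω ⬝ᵥ y t ω) := Finset.sum_le_sum fun ω _ => hle ω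
        _ ≤ 0 := ih (le_of_lt ht')
  -- final contradiction
  have hTle := hA T le_rfl
  obtain ⟨ω₀, hω₀⟩ := Function.ne_iff.mp hxne
  obtain ⟨k₀, hk₀⟩ := Function.ne_iff.mp hω₀
  have hxk₀ : 0 < x ω₀ k₀ := lt_of_le_of_ne (hxnn ω₀ k₀) (Ne.symm hk₀)
  have hxdot : ∀ ω, 0 ≤ S T ω ⬝ᵥ x ω := by
    intro ω
    exact Finset.sum_nonneg fun k _ =>
      mul_nonneg (le_of_lt (hSpos T le_rfl ω k)) (hxnn ω k)
  have hxdot₀ : 0 < S T ω₀ ⬝ᵥ x ω₀ := by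
    refine Finset.sum_pos' (fun k _ =>
      mul_nonneg (le_of_lt (hSpos T le_rfl ω₀ k)) (hxnn ω₀ k)) ?_
    exact ⟨k₀, Finset.mem_univ _, mul_pos (hSpos T le_rfl ω₀ k₀) hxk₀⟩
  have hge : ∀ ω, S T ω ⬝ᵥ x ω ≤ S T ω ⬝ᵥ y T ω := by
    intro ω
    have h0 := hdual T le_rfl ω _ (hyT ω)
    rw [dotProduct_sub] at h0
    linarith
  have hpos : 0 < ∑ ω, q ω * (S T ω ⬝ᵥ y T ω) := by
    have h1 : 0 < ∑ ω, q ω * (S T ω ⬝ᵥ x ω) := by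
      refine Finset.sum_pos' (fun ω _ =>
        mul_nonneg (le_of_lt (hqpos ω)) (hxdot ω)) ?_
      exact ⟨ω₀, Finset.mem_univ _, mul_pos (hqpos ω₀) hxdot₀⟩
    refine lt_of_lt_of_le h1 (Finset.sum_le_sum fun ω _ => ?_)
    exact mul_le_mul_of_nonneg_left (hge ω) (le_of_lt (hqpos ω))
  linarith
end

section
/- In the Kabanov model, for every consistent pricing pair (ℚ, S) (ℚ equivalent to ℙ, S a ℚ-martingale with S_t ∈ 𝒦_t⁺ \ {0} for all t, and S_t^i = 1 for all t) and every superhedging portfolio y_0 ∈ 𝒵_0 of the form y_0 = x e^i, one has x ≥ E_ℚ[ξᵀ S_T]. Consequently π_i^a(ξ) ≥ sup_{(ℚ,S) ∈ 𝒫^i} E_ℚ[ξᵀ S_T]. -/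
open Matrix

/-- in the Kabanov model, for every consistent pricing pair
`(ℚ, S)` (with `ℚ ≈ ℙ` encoded by weights `q ω > 0` summing to `1`, `S` an
adapted `ℚ`-martingale with `S_t ∈ 𝒦_t⁺ \ {0}` and `S_tⁱ = 1`), and every
superhedging portfolio of the form `x eⁱ`, one has `x ≥ E_ℚ[ξᵀ S_T]`;
consequently the ask price dominates `sup` of these risk-neutral expectations. -/
theorem stmt16 (d T : ℕ) (Ω : Type) [Fintype Ω] [DecidableEq Ω]
    (part : ℕ → Ω → Finset Ω)
    (hmem : ∀ t ω, ω ∈ part t ω)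
    (hcong : ∀ t ω ω', ω' ∈ part t ω → part t ω' = part t ω)
    (hrefine : ∀ t ω, part (t + 1) ω ⊆ part t ω)
    (hpart0 : ∀ ω, part 0 ω = Finset.univ)
    (hpartT : ∀ ω, part T ω = {ω})
    (𝒦 : ℕ → Ω → Set (Fin d → ℝ))
    (h𝒦adapt : ∀ t ω ω', ω' ∈ part t ω → 𝒦 t ω' = 𝒦 t ω)
    (ξ : Ω → Fin d → ℝ)
    (q : Ω → ℝ) (hqpos : ∀ ω, 0 < q ω) (hqsum : (∑ ω, q ω) = 1)
    (S : ℕ → Ω → Fin d → ℝ)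
    (hSadapt : ∀ t, t ≤ T → ∀ ω, ∀ ω' ∈ part t ω, S t ω' = S t ω)
    (hmart : ∀ t, t < T → ∀ ω,
      (∑ ω' ∈ part t ω, q ω' • S (t + 1) ω') = (∑ ω' ∈ part t ω, q ω') • S t ω)
    (hSdual : ∀ t, t ≤ T → ∀ ω, (∀ k ∈ 𝒦 t ω, 0 ≤ S t ω ⬝ᵥ k) ∧ S t ω ≠ 0)
    (i : Fin d) (hSi : ∀ t, t ≤ T → ∀ ω, S t ω i = 1)
    (x : ℝ) (y : ℕ → Ω → Fin d → ℝ)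
    (hy0 : ∀ ω, y 0 ω = (Pi.single i x : Fin d → ℝ))
    (hpred : ∀ t, t < T → ∀ ω, ∀ ω' ∈ part t ω, y (t + 1) ω' = y (t + 1) ω)
    (hsf : ∀ t, t < T → ∀ ω, y t ω - y (t + 1) ω ∈ 𝒦 t ω)
    (hsuper : ∀ ω, y T ω - ξ ω ∈ 𝒦 T ω) :
    (∑ ω, q ω * (ξ ω ⬝ᵥ S T ω)) ≤ x := by
  -- grouping identity from the martingale property
  have group : ∀ t, t < T →
      (∑ ω, q ω * (S (t+1) ω ⬝ᵥ y (t+1) ω)) = ∑ ω, q ω * (S t ω ⬝ᵥ y (t+1) ω) := by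
    intro t ht
    have h1 := Finset.sum_fiberwise_of_maps_to
      (fun ω (_ : ω ∈ Finset.univ) => Finset.mem_image_of_mem (part t) (Finset.mem_univ ω))
      (fun ω => q ω * (S (t+1) ω ⬝ᵥ y (t+1) ω))
    have h2 := Finset.sum_fiberwise_of_maps_to
      (fun ω (_ : ω ∈ Finset.univ) => Finset.mem_image_of_mem (part t) (Finset.mem_univ ω))
      (fun ω => q ω * (S t ω ⬝ᵥ y (t+1) ω))
    rw [← h1, ← h2]
    apply Finset.sum_congr rfl
    intro C hC
    obtain ⟨ω₀, -, rfl⟩ := Finset.mem_image.mp hC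
    have hfilter : Finset.univ.filter (fun ω => part t ω = part t ω₀) = part t ω₀ := by
      ext ω'
      simp only [Finset.mem_filter, Finset.mem_univ, true_and]
      exact ⟨fun h => h ▸ hmem t ω', fun h => hcong t ω₀ ω' h⟩
    rw [hfilter]
    calc ∑ ω' ∈ part t ω₀, q ω' * (S (t+1) ω' ⬝ᵥ y (t+1) ω')
        = ∑ ω' ∈ part t ω₀, (q ω' • S (t+1) ω') ⬝ᵥ y (t+1) ω₀ := by
          refine Finset.sum_congr rfl fun ω' hω' => ?_
          rw [hpred t ht ω₀ ω' hω', smul_dotProduct, smul_eq_mul]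
      _ = (∑ ω' ∈ part t ω₀, q ω' • S (t+1) ω') ⬝ᵥ y (t+1) ω₀ := by
          simp only [dotProduct, Finset.sum_apply, Finset.sum_mul]
          exact Finset.sum_comm
      _ = ((∑ ω' ∈ part t ω₀, q ω') • S t ω₀) ⬝ᵥ y (t+1) ω₀ := by rw [hmart t ht ω₀]
      _ = ∑ ω' ∈ part t ω₀, q ω' * (S t ω' ⬝ᵥ y (t+1) ω') := by
          rw [smul_dotProduct, smul_eq_mul, Finset.sum_mul]
          refine Finset.sum_congr rfl fun ω' hω' => ?_
          rw [hSadapt t ht.le ω₀ ω' hω', hpred t ht ω₀ ω' hω']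
  -- the value process is bounded by x
  have key : ∀ t, t ≤ T → (∑ ω, q ω * (S t ω ⬝ᵥ y t ω)) ≤ x := by
    intro t
    induction t with
    | zero =>
      intro _
      have hterm : ∀ ω, S 0 ω ⬝ᵥ y 0 ω = x := by
        intro ω
        rw [hy0 ω, dotProduct_single, hSi 0 (Nat.zero_le T) ω, one_mul]
      have heq : (∑ ω, q ω * (S 0 ω ⬝ᵥ y 0 ω)) = x := by
        calc (∑ ω, q ω * (S 0 ω ⬝ᵥ y 0 ω)) = ∑ ω, q ω * x := by
              refine Finset.sum_congr rfl fun ω _ => by rw [hterm ω]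
          _ = (∑ ω, q ω) * x := by rw [Finset.sum_mul]
          _ = x := by rw [hqsum, one_mul]
      exact heq.le
    | succ t ih =>
      intro hle
      have ht : t < T := hle
      rw [group t ht]
      refine le_trans (Finset.sum_le_sum fun ω _ => ?_) (ih ht.le)
      have h0 : 0 ≤ S t ω ⬝ᵥ (y t ω - y (t+1) ω) :=
        (hSdual t ht.le ω).1 _ (hsf t ht ω)
      rw [dotProduct_sub] at h0
      have := (hqpos ω).le
      nlinarith [h0, (hqpos ω).le]
  refine le_trans (Finset.sum_le_sum fun ω _ => ?_) (key T le_rfl)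
  have h0 : 0 ≤ S T ω ⬝ᵥ (y T ω - ξ ω) := (hSdual T le_rfl ω).1 _ (hsuper ω)
  rw [dotProduct_sub] at h0
  rw [dotProduct_comm]
  nlinarith [h0, (hqpos ω).le]
end
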